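/- Let h : ℝ^d → ℝ be continuous and bounded, and let R : ℝ^d → [0,∞) be continuous and coercive with unique global minimizer θ₀ where R(θ₀) = 0, with e^{−R/τ} integrable for all τ > 0. Then (∫ h(θ) e^{−R(θ)/τ} dθ) / (∫ e^{−R(θ)/τ} dθ) → h(θ₀) as τ → 0⁺. -/

import Mathlib

/-!
Away from any neighbourhood `U` of `θ₀`, coercivity and the strict minimum give `R ≥ m` for
some `m > R θ₀`, while `R < m' := (R θ₀ + m) / 2` on an open neighbourhood of `θ₀` of positive
finite measure. Comparing `e^{-R/τ}` on the two sets, the Gibbs measure gives `Uᶜ` mass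
`O(e^{-(m - m')/τ})`, which tends to `0` as `τ → 0⁺`; averaging a bounded `h` that is continuous
at `θ₀` against such concentrating weights yields `h θ₀`.
-/

open MeasureTheory Filter Topology Set

section Separation

variable {X : Type*} [TopologicalSpace X]

theorem exists_lt_forall_le_of_tendsto_cocompact {R : X → ℝ} (hR : Continuous R)
    (hcoercive : Tendsto R (cocompact X) atTop) {θ₀ : X} (hmin : ∀ θ, θ ≠ θ₀ → R θ₀ < R θ)
    {U : Set X} (hU : U ∈ 𝓝 θ₀) : ∃ m, R θ₀ < m ∧ ∀ θ ∉ U, m ≤ R θ := by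
  obtain ⟨K, hK, hRK⟩ :=
    hasBasis_cocompact.eventually_iff.mp (hcoercive.eventually_ge_atTop (R θ₀ + 1))
  obtain ⟨m, hm, hmK⟩ := (hK.diff isOpen_interior).exists_forall_le' hR.continuousOn
    fun θ hθ => hmin θ fun hθ₀ => hθ.2 (hθ₀ ▸ mem_interior_iff_mem_nhds.2 hU)
  refine ⟨min m (R θ₀ + 1), lt_min hm (lt_add_one _), fun θ hθ => ?_⟩
  by_cases hθK : θ ∈ K
  · exact min_le_of_left_le (hmK θ ⟨hθK, fun hθU => hθ (interior_subset hθU)⟩)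
  · exact min_le_of_right_le (hRK hθK)

end Separation

theorem Real.exp_neg_div_le_exp_mul_exp_neg {r m τ : ℝ} (hτ : 0 < τ) (hτ1 : τ ≤ 1)
    (hm : m ≤ r) : Real.exp (-r / τ) ≤ Real.exp (m - m / τ) * Real.exp (-r) := by
  rw [← Real.exp_add, Real.exp_le_exp]
  have hgap : m - m / τ + -r - -r / τ = (r - m) * (1 - τ) / τ := by
    field_simp
    ring
  have : 0 ≤ (r - m) * (1 - τ) / τ := by
    apply div_nonneg (mul_nonneg _ _) hτ.le <;> linarith
  linarith

theorem Real.tendsto_exp_neg_div_nhdsGT_zero {c : ℝ} (hc : 0 < c) :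
    Tendsto (fun τ => Real.exp (-c / τ)) (𝓝[>] 0) (𝓝 0) := by
  have hlin : Tendsto (fun τ : ℝ => -c / τ) (𝓝[>] 0) atBot := by
    simpa only [div_eq_mul_inv] using
      tendsto_inv_nhdsGT_zero.const_mul_atTop_of_neg (neg_neg_of_pos hc)
  exact Real.tendsto_exp_atBot.comp hlin

section Integral

variable {X : Type*} [MeasurableSpace X] {μ : Measure X}

theorem abs_integral_mul_le_of_abs_le {g w : X → ℝ} (hg : AEStronglyMeasurable g μ)
    (hw : Integrable w μ) (hw0 : 0 ≤ w) {U : Set X} (hU : MeasurableSet U) {ε B : ℝ}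
    (hgU : ∀ x ∈ U, |g x| ≤ ε) (hgB : ∀ x, |g x| ≤ B) :
    |∫ x, g x * w x ∂μ| ≤ ε * ∫ x in U, w x ∂μ + B * ∫ x in Uᶜ, w x ∂μ := by
  have hgw : Integrable (fun x => |g x| * w x) μ :=
    hw.bdd_mul (continuous_abs.comp_aestronglyMeasurable hg)
      (ae_of_all _ fun x => by simpa using hgB x)
  calc |∫ x, g x * w x ∂μ|
      ≤ ∫ x, |g x * w x| ∂μ := abs_integral_le_integral_abs
    _ = ∫ x, |g x| * w x ∂μ := by
        congr 1
        funext x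
        rw [abs_mul, abs_of_nonneg (hw0 x)]
    _ = ∫ x in U, |g x| * w x ∂μ + ∫ x in Uᶜ, |g x| * w x ∂μ :=
        (integral_add_compl hU hgw).symm
    _ ≤ ∫ x in U, ε * w x ∂μ + ∫ x in Uᶜ, B * w x ∂μ :=
        add_le_add
          (setIntegral_mono_on hgw.integrableOn (hw.const_mul ε).integrableOn hU
            fun x hx => mul_le_mul_of_nonneg_right (hgU x hx) (hw0 x))
          (setIntegral_mono_on hgw.integrableOn (hw.const_mul B).integrableOn hU.compl
            fun x _ => mul_le_mul_of_nonneg_right (hgB x) (hw0 x))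
    _ = ε * ∫ x in U, w x ∂μ + B * ∫ x in Uᶜ, w x ∂μ := by
        rw [integral_const_mul, integral_const_mul]

theorem setIntegral_exp_neg_div_le {R : X → ℝ} {s : Set X} (hs : MeasurableSet s) {m τ : ℝ}
    (hτ : 0 < τ) (hτ1 : τ ≤ 1) (hms : ∀ θ ∈ s, m ≤ R θ)
    (hint : Integrable (fun θ => Real.exp (-R θ)) μ) :
    ∫ θ in s, Real.exp (-R θ / τ) ∂μ ≤ Real.exp (m - m / τ) * ∫ θ, Real.exp (-R θ) ∂μ := by
  calc ∫ θ in s, Real.exp (-R θ / τ) ∂μ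
      ≤ ∫ θ in s, Real.exp (m - m / τ) * Real.exp (-R θ) ∂μ :=
        integral_mono_of_nonneg (ae_of_all _ fun θ => (Real.exp_pos _).le)
          (hint.const_mul _).integrableOn
          (ae_restrict_of_forall_mem hs fun θ hθ =>
            Real.exp_neg_div_le_exp_mul_exp_neg hτ hτ1 (hms θ hθ))
    _ = Real.exp (m - m / τ) * ∫ θ in s, Real.exp (-R θ) ∂μ := integral_const_mul _ _
    _ ≤ Real.exp (m - m / τ) * ∫ θ, Real.exp (-R θ) ∂μ :=
        mul_le_mul_of_nonneg_left
          (setIntegral_le_integral hint (ae_of_all _ fun θ => (Real.exp_pos _).le))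
          (Real.exp_pos _).le

end Integral

section Gibbs

variable {X : Type*} [TopologicalSpace X] [MeasurableSpace X] [OpensMeasurableSpace X]
  {μ : Measure X}

theorem tendsto_integral_mul_div_integral_of_concentrate {ι : Type*} {l : Filter ι}
    {w : ι → X → ℝ} {θ₀ : X}
    (hw : ∀ᶠ i in l, Integrable (w i) μ ∧ 0 ≤ w i ∧ 0 < ∫ x, w i x ∂μ)
    (hconc : ∀ U, IsOpen U → θ₀ ∈ U →
      Tendsto (fun i => (∫ x in Uᶜ, w i x ∂μ) / ∫ x, w i x ∂μ) l (𝓝 0))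
    {h : X → ℝ} (hh : ContinuousAt h θ₀) (hhm : AEStronglyMeasurable h μ) {B : ℝ}
    (hB : ∀ x, |h x| ≤ B) :
    Tendsto (fun i => (∫ x, h x * w i x ∂μ) / ∫ x, w i x ∂μ) l (𝓝 (h θ₀)) := by
  rw [Metric.tendsto_nhds]
  intro ε hε
  obtain ⟨U, hUε, hUo, hθU⟩ :=
    mem_nhds_iff.mp (hh (Metric.ball_mem_nhds (h θ₀) (half_pos hε)))
  have hsmall : ∀ᶠ i in l, 2 * B * ((∫ x in Uᶜ, w i x ∂μ) / ∫ x, w i x ∂μ) < ε / 2 := by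
    refine Tendsto.eventually_lt_const (half_pos hε) ?_
    simpa using (hconc U hUo hθU).const_mul (2 * B)
  filter_upwards [hw, hsmall] with i ⟨hwi, hw0, hZ⟩ hsmall
  have hhw : Integrable (fun x => h x * w i x) μ :=
    hwi.bdd_mul hhm (ae_of_all _ fun x => by simpa using hB x)
  have hcentre :
      ∫ x, (h x - h θ₀) * w i x ∂μ = ∫ x, h x * w i x ∂μ - h θ₀ * ∫ x, w i x ∂μ := by
    simp_rw [sub_mul]
    rw [integral_sub hhw (hwi.const_mul _), integral_const_mul]
  have hdev := abs_integral_mul_le_of_abs_le (g := fun x => h x - h θ₀) (ε := ε / 2) (B := 2 * B)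
    (hhm.sub aestronglyMeasurable_const) hwi hw0 hUo.measurableSet
    (fun x hx => by rw [← Real.dist_eq]; exact (Metric.mem_ball.mp (hUε hx)).le)
    (fun x => (abs_sub _ _).trans (by linarith [hB x, hB θ₀]))
  have hU_le : ∫ x in U, w i x ∂μ ≤ ∫ x, w i x ∂μ :=
    setIntegral_le_integral hwi (ae_of_all _ hw0)
  rw [Real.dist_eq]
  calc |(∫ x, h x * w i x ∂μ) / ∫ x, w i x ∂μ - h θ₀|
      = |∫ x, (h x - h θ₀) * w i x ∂μ| / ∫ x, w i x ∂μ := by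
        rw [hcentre, div_sub' hZ.ne', abs_div, abs_of_pos hZ, mul_comm]
    _ ≤ (ε / 2 * ∫ x, w i x ∂μ + 2 * B * ∫ x in Uᶜ, w i x ∂μ) / ∫ x, w i x ∂μ := by
        gcongr
        exact hdev.trans (by gcongr)
    _ = ε / 2 + 2 * B * ((∫ x in Uᶜ, w i x ∂μ) / ∫ x, w i x ∂μ) := by
        field_simp
    _ < ε := by linarith

variable {R : X → ℝ}

theorem exists_pos_forall_exp_neg_div_mul_le_integral [μ.IsOpenPosMeasure]
    [IsLocallyFiniteMeasure μ] (hR : Continuous R) {θ₀ : X} {m : ℝ} (hm : R θ₀ < m) :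
    ∃ v > 0, ∀ τ > 0, Integrable (fun θ => Real.exp (-R θ / τ)) μ →
      Real.exp (-m / τ) * v ≤ ∫ θ, Real.exp (-R θ / τ) ∂μ := by
  obtain ⟨W, hθW, hWo, hWμ⟩ := μ.exists_isOpen_measure_lt_top θ₀
  set V := W ∩ {θ | R θ < m}
  have hVo : IsOpen V := hWo.inter (isOpen_lt hR continuous_const)
  have hVμ : μ V ≠ ⊤ := ((measure_mono inter_subset_left).trans_lt hWμ).ne
  refine ⟨μ.real V, ENNReal.toReal_pos (hVo.measure_ne_zero μ ⟨θ₀, hθW, hm⟩) hVμ,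
    fun τ hτ hint => ?_⟩
  calc Real.exp (-m / τ) * μ.real V
      ≤ ∫ θ in V, Real.exp (-R θ / τ) ∂μ :=
        setIntegral_ge_of_const_le_real hVo.measurableSet hVμ
          (fun θ hθ => Real.exp_le_exp.mpr (by gcongr; exact hθ.2.le)) hint.integrableOn
    _ ≤ ∫ θ, Real.exp (-R θ / τ) ∂μ :=
        setIntegral_le_integral hint (ae_of_all _ fun θ => (Real.exp_pos _).le)

theorem tendsto_setIntegral_compl_exp_neg_div_div_integral [μ.IsOpenPosMeasure]
    [IsLocallyFiniteMeasure μ] (hR : Continuous R)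
    (hcoercive : Tendsto R (cocompact X) atTop) {θ₀ : X} (hmin : ∀ θ, θ ≠ θ₀ → R θ₀ < R θ)
    (hint : ∀ τ : ℝ, 0 < τ → Integrable (fun θ => Real.exp (-R θ / τ)) μ)
    {U : Set X} (hUo : IsOpen U) (hθU : θ₀ ∈ U) :
    Tendsto (fun τ => (∫ θ in Uᶜ, Real.exp (-R θ / τ) ∂μ) / ∫ θ, Real.exp (-R θ / τ) ∂μ)
      (𝓝[>] 0) (𝓝 0) := by
  obtain ⟨m, hm, hmU⟩ :=
    exists_lt_forall_le_of_tendsto_cocompact hR hcoercive hmin (hUo.mem_nhds hθU)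
  obtain ⟨v, hv, hZ⟩ := exists_pos_forall_exp_neg_div_mul_le_integral (μ := μ) (θ₀ := θ₀)
    (m := (R θ₀ + m) / 2) hR (by linarith)
  have hint₁ : Integrable (fun θ => Real.exp (-R θ)) μ := by simpa using hint 1 one_pos
  set C := ∫ θ, Real.exp (-R θ) ∂μ
  have hgap : 0 < (m - R θ₀) / 2 := by linarith
  have hbound : ∀ᶠ τ in 𝓝[>] (0 : ℝ),
      (∫ θ in Uᶜ, Real.exp (-R θ / τ) ∂μ) / ∫ θ, Real.exp (-R θ / τ) ∂μ ≤
        Real.exp m * C / v * Real.exp (-((m - R θ₀) / 2) / τ) := by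
    filter_upwards [self_mem_nhdsWithin, Ioo_mem_nhdsGT one_pos] with τ (hτ : 0 < τ) hτ1
    calc (∫ θ in Uᶜ, Real.exp (-R θ / τ) ∂μ) / ∫ θ, Real.exp (-R θ / τ) ∂μ
        ≤ Real.exp (m - m / τ) * C / (Real.exp (-((R θ₀ + m) / 2) / τ) * v) :=
          div_le_div₀ (by positivity)
            (setIntegral_exp_neg_div_le hUo.measurableSet.compl hτ hτ1.2.le hmU hint₁)
            (by positivity) (hZ τ hτ (hint τ hτ))
      _ = Real.exp m * C / v * Real.exp (-((m - R θ₀) / 2) / τ) := by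
          rw [show m - m / τ = m + -((R θ₀ + m) / 2) / τ + -((m - R θ₀) / 2) / τ by ring,
            Real.exp_add, Real.exp_add]
          field_simp
  refine squeeze_zero' (Eventually.of_forall fun τ => ?_) hbound ?_
  · exact div_nonneg (integral_nonneg fun θ => (Real.exp_pos _).le)
      (integral_nonneg fun θ => (Real.exp_pos _).le)
  · simpa using (Real.tendsto_exp_neg_div_nhdsGT_zero hgap).const_mul (Real.exp m * C / v)

end Gibbs

theorem gibbs_average_tendsto_general {d : ℕ}
    (h : EuclideanSpace ℝ (Fin d) → ℝ) (hh : Continuous h)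
    (B : ℝ) (hhB : ∀ θ, |h θ| ≤ B)
    (R : EuclideanSpace ℝ (Fin d) → ℝ) (hR : Continuous R)
    (θ₀ : EuclideanSpace ℝ (Fin d))
    (hmin : ∀ θ, θ ≠ θ₀ → R θ₀ < R θ)
    (hcoercive : Tendsto R (cocompact _) atTop)
    (hint : ∀ τ : ℝ, 0 < τ → Integrable (fun θ => Real.exp (-R θ / τ))) :
    Tendsto
      (fun τ : ℝ =>
        (∫ θ, h θ * Real.exp (-R θ / τ)) / ∫ θ, Real.exp (-R θ / τ))
      (nhdsWithin 0 (Set.Ioi 0)) (nhds (h θ₀)) := by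
  refine tendsto_integral_mul_div_integral_of_concentrate ?_
    (fun U hUo hθU =>
      tendsto_setIntegral_compl_exp_neg_div_div_integral hR hcoercive hmin hint hUo hθU)
    hh.continuousAt hh.aestronglyMeasurable hhB
  filter_upwards [self_mem_nhdsWithin] with τ (hτ : 0 < τ)
  exact ⟨hint τ hτ, fun θ => (Real.exp_pos _).le, integral_exp_pos (hint τ hτ)⟩

/-- First-order Laplace approximation: for a continuous bounded `h` and a coercive
continuous regularizer `R ≥ 0` with unique global minimizer `θ₀` where `R θ₀ = 0`,
the Gibbs average of `h` under `π_τ ∝ e^{-R/τ}` tends to `h θ₀` as `τ → 0⁺`. -/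
theorem gibbs_average_tendsto {d : ℕ}
    (h : EuclideanSpace ℝ (Fin d) → ℝ) (hh : Continuous h)
    (B : ℝ) (hhB : ∀ θ, |h θ| ≤ B)
    (R : EuclideanSpace ℝ (Fin d) → ℝ) (hR : Continuous R)
    (hR0 : ∀ θ, 0 ≤ R θ)
    (θ₀ : EuclideanSpace ℝ (Fin d)) (hθ₀ : R θ₀ = 0)
    (hmin : ∀ θ, θ ≠ θ₀ → R θ₀ < R θ)
    (hcoercive : Tendsto R (cocompact _) atTop)
    (hint : ∀ τ : ℝ, 0 < τ → Integrable (fun θ => Real.exp (-R θ / τ))) :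
    Tendsto
      (fun τ : ℝ =>
        (∫ θ, h θ * Real.exp (-R θ / τ)) / ∫ θ, Real.exp (-R θ / τ))
      (nhdsWithin 0 (Set.Ioi 0)) (nhds (h θ₀)) :=
  gibbs_average_tendsto_general h hh B hhB R hR θ₀ hmin hcoercive hint
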